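/- With the encryption scheme Enc_{u,v}(k,x) = (u, v, x ⊕ (k ∥ (u·k+v)_lsb)) and key length ℓ = n − t + 2log₂(1/ε) − 5, for any plaintext distribution X with H₂(X) ≥ t − 2, the distribution of Enc_{U,V}(K,X) (over uniform K, U, V and the plaintext) is within statistical distance 8ε of the uniform distribution on {0,1}^{2n}. -/
import Mathlib

lemma zmod2_add_self {n : ℕ} (a : Fin n → ZMod 2) : a + a = 0 :=
  funext fun i => by
    have h2 : ∀ x : ZMod 2, x + x = 0 := by decide
    simpa using h2 (a i)

lemma zmod2_add_cancel {n : ℕ} (a b : Fin n → ZMod 2) : a + b + b = a := by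
  rw [add_assoc, zmod2_add_self, add_zero]

lemma append_add {l m : ℕ} (a c : Fin l → ZMod 2) (b d : Fin m → ZMod 2) :
    Fin.append a b + Fin.append c d = Fin.append (a + c) (b + d) := by
  funext i
  refine Fin.addCases (fun j => ?_) (fun j => ?_) i <;>
    simp [Fin.append_left, Fin.append_right]

lemma append_zero' {l m : ℕ} :
    Fin.append (0 : Fin l → ZMod 2) (0 : Fin m → ZMod 2) = 0 := by
  funext i
  refine Fin.addCases (fun j => ?_) (fun j => ?_) i <;>
    simp [Fin.append_left, Fin.append_right]

lemma append_inj {l m : ℕ} {a c : Fin l → ZMod 2} {b d : Fin m → ZMod 2}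
    (h : Fin.append a b = Fin.append c d) : a = c ∧ b = d := by
  constructor
  · funext i
    have := congrFun h (Fin.castAdd m i)
    simpa [Fin.append_left] using this
  · funext i
    have := congrFun h (Fin.natAdd l i)
    simpa [Fin.append_right] using this

/-- fiber-counting sum lemma for a surjective additive hom -/
lemma sum_comp_surj {A B : Type*} [Fintype A] [Fintype B] [DecidableEq B]
    [AddGroup A] [AddGroup B] (φ : A →+ B) (hφ : Function.Surjective φ) (h : B → ℝ) :
    (Fintype.card B : ℝ) * ∑ a, h (φ a) = (Fintype.card A : ℝ) * ∑ b, h b := by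
  classical
  set K := (Finset.univ.filter fun a => φ a = (0 : B)).card with hKdef
  have hfib : ∀ b : B, (Finset.univ.filter fun a => φ a = b).card = K := by
    intro b
    obtain ⟨a0, ha0⟩ := hφ b
    rw [hKdef]
    apply Finset.card_bij (fun a _ => a - a0)
    · intro a ha
      simp only [Finset.mem_filter, Finset.mem_univ, true_and] at ha ⊢
      simp [map_sub, ha, ha0]
    · intro a ha a' ha' hh
      exact sub_left_injective hh
    · intro a ha
      simp only [Finset.mem_filter, Finset.mem_univ, true_and] at ha
      refine ⟨a + a0, ?_, by rw [add_sub_cancel_right]⟩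
      simp only [Finset.mem_filter, Finset.mem_univ, true_and, map_add, ha, ha0, zero_add]
  have hcardA : (Fintype.card A) = Fintype.card B * K := by
    have := Finset.card_eq_sum_card_fiberwise
      (f := φ) (s := (Finset.univ : Finset A)) (t := (Finset.univ : Finset B))
      (fun a _ => Finset.mem_univ _)
    simpa [hfib, Finset.card_univ, mul_comm] using this
  have hsum : ∑ a, h (φ a) = (K : ℝ) * ∑ b, h b := by
    have := Finset.sum_fiberwise' (Finset.univ : Finset A) φ h
    rw [← this]
    rw [Finset.mul_sum]
    refine Finset.sum_congr rfl fun b _ => ?_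
    rw [Finset.sum_const, hfib b, nsmul_eq_mul]
  rw [hsum, hcardA]
  push_cast
  ring

set_option maxHeartbeats 3200000 in
/-- Theorem 2 of the paper, indistinguishability form: with
`n = ℓ + m`, key length `ℓ = n - t + 2·log₂(1/ε) - 5`, and plaintext collision
entropy `H₂(X) ≥ t - 2` (i.e. `∑ x, p x ^ 2 ≤ 2^{-(t-2)}`), the distribution of
the ciphertext `Enc_{U,V}(K,X) = (U, V, X ⊕ (K ∥ ((U·inj K)_lsb + V)))` is within
statistical distance `8ε` of the uniform distribution on the ciphertext space. -/
theorem stmt_5 {l m lam : ℕ} (hlam : lam = max l m)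
    {F : Type*} [Field F] [Fintype F] [DecidableEq F]
    (hcard : Fintype.card F = 2 ^ lam)
    (lsb : F →+ (Fin m → ZMod 2)) (hlsb : Function.Surjective lsb)
    (inj : (Fin l → ZMod 2) →+ F) (hinj : Function.Injective inj)
    (p : (Fin (l + m) → ZMod 2) → ℝ) (hp : ∀ x, 0 ≤ p x) (hpsum : ∑ x, p x = 1)
    (t ε : ℝ) (hε : 0 < ε)
    (hl : (l : ℝ) = (l + m : ℕ) - t + 2 * Real.logb 2 (1 / ε) - 5)
    (hH2 : ∑ x, p x ^ 2 ≤ (2 : ℝ) ^ (-(t - 2))) :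
    (1 / 2) * ∑ c : F × (Fin m → ZMod 2) × (Fin (l + m) → ZMod 2),
      |(∑ u : F, ∑ v : Fin m → ZMod 2, ∑ k : Fin l → ZMod 2,
          ∑ x : Fin (l + m) → ZMod 2,
            (1 / (2 ^ lam * 2 ^ m * 2 ^ l) : ℝ) * p x *
              (if (u, v, x + Fin.append k (lsb (u * inj k) + v)) = c then 1 else 0))
        - 1 / (2 ^ lam * 2 ^ m * 2 ^ (l + m))|
      ≤ 8 * ε := by
  classical
  have cardGl : Fintype.card (Fin l → ZMod 2) = 2 ^ l := by
    simp [Fintype.card_fun]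
  have cardG2 : Fintype.card (Fin m → ZMod 2) = 2 ^ m := by
    simp [Fintype.card_fun]
  have cardGn : Fintype.card (Fin (l + m) → ZMod 2) = 2 ^ (l + m) := by
    simp [Fintype.card_fun]
  set w : ℝ := (1 / (2 ^ lam * 2 ^ m * 2 ^ l) : ℝ) with hw
  set N : ℝ := (2 ^ lam * 2 ^ m * 2 ^ (l + m) : ℝ) with hN
  have hN0 : (0 : ℝ) < N := by rw [hN]; positivity
  have hw0 : (0 : ℝ) < w := by rw [hw]; positivity
  set g : F → (Fin m → ZMod 2) → (Fin l → ZMod 2) → (Fin (l + m) → ZMod 2) :=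
    fun u v k => Fin.append k (lsb (u * inj k) + v) with hg
  set q : F × (Fin m → ZMod 2) × (Fin (l + m) → ZMod 2) → ℝ :=
    fun c => w * ∑ k, p (c.2.2 + g c.1 c.2.1 k) with hqdef
  -- Step 1: pointwise identification of the ciphertext distribution
  have hq : ∀ c : F × (Fin m → ZMod 2) × (Fin (l + m) → ZMod 2),
      (∑ u : F, ∑ v : Fin m → ZMod 2, ∑ k : Fin l → ZMod 2,
          ∑ x : Fin (l + m) → ZMod 2,
            w * p x * (if (u, v, x + g u v k) = c then 1 else 0)) = q c := by
    rintro ⟨cu, cv, cy⟩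
    rw [hqdef]
    simp only []
    rw [Finset.sum_eq_single cu]
    · rw [Finset.sum_eq_single cv]
      · rw [Finset.mul_sum]
        refine Finset.sum_congr rfl fun k _ => ?_
        rw [Finset.sum_eq_single (cy + g cu cv k)]
        · rw [if_pos (by rw [zmod2_add_cancel]), mul_one]
        · intro x _ hx
          rw [if_neg, mul_zero]
          intro h
          rw [Prod.mk.injEq, Prod.mk.injEq] at h
          exact hx (by rw [← h.2.2, zmod2_add_cancel])
        · intro h; exact absurd (Finset.mem_univ _) h
      · intro v _ hv
        refine Finset.sum_eq_zero fun k _ => Finset.sum_eq_zero fun x _ => ?_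
        rw [if_neg, mul_zero]
        intro h
        rw [Prod.mk.injEq, Prod.mk.injEq] at h
        exact hv h.2.1
      · intro h; exact absurd (Finset.mem_univ _) h
    · intro u _ hu
      refine Finset.sum_eq_zero fun v _ => Finset.sum_eq_zero fun k _ =>
        Finset.sum_eq_zero fun x _ => ?_
      rw [if_neg, mul_zero]
      intro h
      rw [Prod.mk.injEq] at h
      exact hu h.1
    · intro h; exact absurd (Finset.mem_univ _) h
  -- translation invariance of total mass
  have hsum1 : ∀ a : Fin (l + m) → ZMod 2, ∑ y, p (y + a) = 1 := by
    intro a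
    rw [← hpsum]
    exact Fintype.sum_equiv (Equiv.addRight a) _ _ (fun y => rfl)
  -- Step 2: q is a probability distribution
  have hqsum : ∑ c, q c = 1 := by
    rw [hqdef]
    rw [Fintype.sum_prod_type]
    simp only [Fintype.sum_prod_type]
    have step : ∀ (u : F) (v : Fin m → ZMod 2),
        (∑ y : Fin (l + m) → ZMod 2, w * ∑ k, p (y + g u v k)) = w * 2 ^ l := by
      intro u v
      rw [← Finset.mul_sum, Finset.sum_comm]
      have : ∀ k : Fin l → ZMod 2, (∑ y, p (y + g u v k)) = 1 := fun k => hsum1 _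
      rw [Finset.sum_congr rfl fun k _ => this k]
      simp [cardGl]
    rw [Finset.sum_congr rfl fun u _ => Finset.sum_congr rfl fun v _ => step u v]
    simp only [Finset.sum_const, Finset.card_univ, cardG2, hcard, nsmul_eq_mul]
    rw [hw]
    push_cast
    field_simp
  -- collision quantities
  set T : F → (Fin l → ZMod 2) → ℝ :=
    fun u d => ∑ z, p z * p (z + Fin.append d (lsb (u * inj d))) with hT
  set R : (Fin l → ZMod 2) → ℝ :=
    fun d => ∑ e : Fin m → ZMod 2, ∑ z, p z * p (z + Fin.append d e) with hR
  have swap_z : ∀ a b : Fin (l + m) → ZMod 2,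
      (∑ y, p (y + a) * p (y + b)) = ∑ z, p z * p (z + (a + b)) := by
    intro a b
    refine (Fintype.sum_equiv (Equiv.addRight a) _ _ fun z => ?_).symm
    rw [Equiv.coe_addRight, zmod2_add_cancel, add_assoc]
  have gadd : ∀ (u : F) (v : Fin m → ZMod 2) (k k' : Fin l → ZMod 2),
      g u v k + g u v k' = Fin.append (k + k') (lsb (u * inj (k + k'))) := by
    intro u v k k'
    rw [hg]
    dsimp only
    rw [append_add]
    congr 1
    rw [add_add_add_comm, zmod2_add_self, add_zero, ← map_add, ← mul_add, ← map_add]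
  have hq2eq : ∑ c, q c ^ 2 = w ^ 2 * 2 ^ m * 2 ^ l * ∑ u : F, ∑ d, T u d := by
    rw [hqdef]
    dsimp only
    rw [Fintype.sum_prod_type]
    simp only [Fintype.sum_prod_type]
    have inner : ∀ (u : F) (v : Fin m → ZMod 2),
        (∑ y, (w * ∑ k, p (y + g u v k)) ^ 2) = w ^ 2 * (2 ^ l * ∑ d, T u d) := by
      intro u v
      calc (∑ y, (w * ∑ k, p (y + g u v k)) ^ 2)
          = w ^ 2 * ∑ y, ∑ k, ∑ k', p (y + g u v k) * p (y + g u v k') := by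
            rw [Finset.mul_sum]
            refine Finset.sum_congr rfl fun y _ => ?_
            rw [mul_pow, sq (∑ k, p (y + g u v k)), Fintype.sum_mul_sum]
        _ = w ^ 2 * ∑ k, ∑ k', ∑ y, p (y + g u v k) * p (y + g u v k') := by
            congr 1
            rw [Finset.sum_comm]
            exact Finset.sum_congr rfl fun k _ => Finset.sum_comm
        _ = w ^ 2 * ∑ k, ∑ k', T u (k + k') := by
            congr 1
            refine Finset.sum_congr rfl fun k _ => Finset.sum_congr rfl fun k' _ => ?_
            rw [swap_z, gadd]
        _ = w ^ 2 * ∑ k : Fin l → ZMod 2, ∑ d, T u d := by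
            congr 1
            exact Finset.sum_congr rfl fun k _ => Equiv.sum_comp (Equiv.addLeft k) (T u)
        _ = w ^ 2 * (2 ^ l * ∑ d, T u d) := by
            rw [Finset.sum_const, Finset.card_univ, cardGl, nsmul_eq_mul]
            push_cast
            ring
    rw [Finset.sum_congr rfl fun u _ => Finset.sum_congr rfl fun v _ => inner u v]
    have step2 : ∀ u : F, (∑ _v : Fin m → ZMod 2, w ^ 2 * (2 ^ l * ∑ d, T u d))
        = (w ^ 2 * 2 ^ m * 2 ^ l) * ∑ d, T u d := by
      intro u
      rw [Finset.sum_const, Finset.card_univ, cardG2, nsmul_eq_mul]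
      push_cast
      ring
    rw [Finset.sum_congr rfl fun u _ => step2 u, ← Finset.mul_sum]
  have hT0 : ∑ u : F, T u 0 = 2 ^ lam * ∑ x, p x ^ 2 := by
    have hTu : ∀ u : F, T u 0 = ∑ x, p x ^ 2 := by
      intro u
      rw [hT]
      dsimp only
      rw [map_zero, mul_zero, map_zero, append_zero']
      simp [sq]
    rw [Finset.sum_congr rfl fun u _ => hTu u]
    rw [Finset.sum_const, Finset.card_univ, hcard, nsmul_eq_mul]
    push_cast
    ring
  have hTd : ∀ d : Fin l → ZMod 2, d ≠ 0 →
      (2 : ℝ) ^ m * ∑ u : F, T u d = 2 ^ lam * R d := by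
    intro d hd
    have hinjd : inj d ≠ 0 := fun h => hd (hinj (h.trans (map_zero inj).symm))
    have h1 : ∑ u : F, T u d = ∑ f : F, ∑ z, p z * p (z + Fin.append d (lsb f)) := by
      rw [hT]
      dsimp only
      exact Equiv.sum_comp (Equiv.mulRight₀ (inj d) hinjd)
        (fun f => ∑ z, p z * p (z + Fin.append d (lsb f)))
    rw [h1, hR]
    have h2 := sum_comp_surj lsb hlsb (fun e => ∑ z, p z * p (z + Fin.append d e))
    rw [cardG2, hcard] at h2
    push_cast at h2
    exact h2
  have hRtot : ∑ d, R d = 1 := by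
    have happ : ∀ z : Fin (l + m) → ZMod 2,
        (∑ d : Fin l → ZMod 2, ∑ e : Fin m → ZMod 2, p (z + Fin.append d e)) = 1 := by
      intro z
      have hprod : (∑ de : (Fin l → ZMod 2) × (Fin m → ZMod 2), p (z + Fin.append de.1 de.2))
          = ∑ d : Fin l → ZMod 2, ∑ e : Fin m → ZMod 2, p (z + Fin.append d e) :=
        Fintype.sum_prod_type _
      rw [← hprod, ← hpsum]
      refine Fintype.sum_bijective
        (fun de : (Fin l → ZMod 2) × (Fin m → ZMod 2) => z + Fin.append de.1 de.2)
        ?_ _ _ (fun de => rfl)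
      rw [Fintype.bijective_iff_injective_and_card]
      constructor
      · intro a b hab
        obtain ⟨h3, h4⟩ := append_inj (add_left_cancel hab)
        exact Prod.ext h3 h4
      · simp [cardGn, pow_add, Fintype.card_fun]
    rw [hR]
    dsimp only
    rw [Finset.sum_congr rfl fun d _ => Finset.sum_comm, Finset.sum_comm]
    have hz : ∀ z, (∑ d : Fin l → ZMod 2, ∑ e : Fin m → ZMod 2,
        p z * p (z + Fin.append d e)) = p z := by
      intro z
      simp_rw [← Finset.mul_sum]
      rw [happ z, mul_one]
    rw [Finset.sum_congr rfl fun z _ => hz z, hpsum]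
  have hRnn : ∀ d, 0 ≤ R d := by
    intro d
    rw [hR]
    dsimp only
    exact Finset.sum_nonneg fun e _ => Finset.sum_nonneg fun z _ => mul_nonneg (hp z) (hp _)
  -- collision bound
  have hq2 : ∑ c, q c ^ 2 ≤ w * (∑ x, p x ^ 2 + 1 / 2 ^ m) := by
    rw [hq2eq]
    have split : ∑ u : F, ∑ d, T u d
        = ∑ u : F, T u 0 + ∑ d ∈ Finset.univ.erase 0, ∑ u : F, T u d := by
      rw [Finset.sum_comm]
      exact (Finset.add_sum_erase _ _ (Finset.mem_univ 0)).symm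
    rw [split, hT0]
    have h2m : (0 : ℝ) < 2 ^ m := by positivity
    have hstep : ∑ d ∈ Finset.univ.erase 0, ∑ u : F, T u d ≤ 2 ^ lam / 2 ^ m := by
      have e1 : ∀ d ∈ Finset.univ.erase 0, (∑ u : F, T u d) = 2 ^ lam / 2 ^ m * R d := by
        intro d hd
        have h := hTd d (Finset.ne_of_mem_erase hd)
        have h' : ∑ u : F, T u d = (2 ^ lam * R d) / 2 ^ m := by
          rw [eq_div_iff h2m.ne']
          linear_combination h
        rw [h']
        ring
      rw [Finset.sum_congr rfl e1, ← Finset.mul_sum]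
      have h2 : ∑ d ∈ Finset.univ.erase 0, R d ≤ 1 := by
        rw [← hRtot]
        exact Finset.sum_le_sum_of_subset_of_nonneg (Finset.subset_univ _)
          (fun d _ _ => hRnn d)
      calc 2 ^ lam / 2 ^ m * ∑ d ∈ Finset.univ.erase 0, R d
          ≤ 2 ^ lam / 2 ^ m * 1 := by
            apply mul_le_mul_of_nonneg_left h2 (by positivity)
        _ = 2 ^ lam / 2 ^ m := mul_one _
    have hid : w ^ 2 * 2 ^ m * 2 ^ l * (2 ^ lam * ∑ x, p x ^ 2 + 2 ^ lam / 2 ^ m)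
        = w * (∑ x, p x ^ 2 + 1 / 2 ^ m) := by
      rw [hw]
      field_simp
    rw [← hid]
    have hnn : (0 : ℝ) ≤ w ^ 2 * 2 ^ m * 2 ^ l := by positivity
    apply mul_le_mul_of_nonneg_left _ hnn
    linarith [hstep]
  -- cardinality of ciphertext space
  have cardC : ((Fintype.card (F × (Fin m → ZMod 2) × (Fin (l + m) → ZMod 2)) : ℕ) : ℝ)
      = N := by
    rw [Fintype.card_prod, Fintype.card_prod, hcard, cardG2, cardGn, hN]
    push_cast
    ring
  -- variance bound
  have hvar : ∑ c, (q c - 1 / N) ^ 2 ≤ (2 ^ m * ∑ x, p x ^ 2) / N := by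
    have expand : ∑ c, (q c - 1 / N) ^ 2 = (∑ c, q c ^ 2) - 1 / N := by
      have e : ∀ c : F × (Fin m → ZMod 2) × (Fin (l + m) → ZMod 2),
          (q c - 1 / N) ^ 2 = q c ^ 2 - 2 / N * q c + (1 / N) ^ 2 := fun c => by ring
      rw [Finset.sum_congr rfl fun c _ => e c, Finset.sum_add_distrib,
        Finset.sum_sub_distrib, ← Finset.mul_sum, hqsum, Finset.sum_const,
        Finset.card_univ, nsmul_eq_mul, cardC]
      field_simp
      ring
    rw [expand]
    have hidN : w * (∑ x, p x ^ 2 + 1 / 2 ^ m) - 1 / N = (2 ^ m * ∑ x, p x ^ 2) / N := by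
      rw [hw, hN, pow_add]
      field_simp
      ring
    linarith [hq2]
  -- Cauchy–Schwarz
  have hCS : (∑ c, |q c - 1 / N|) ^ 2 ≤ N * ∑ c, (q c - 1 / N) ^ 2 := by
    have h := sq_sum_le_card_mul_sum_sq (s := (Finset.univ : Finset (F × (Fin m → ZMod 2) × (Fin (l + m) → ZMod 2)))) (f := fun c => |q c - 1 / N|)
    simp only [sq_abs] at h
    rwa [Finset.card_univ, cardC] at h
  have hSnn : (0 : ℝ) ≤ ∑ c, |q c - 1 / N| := Finset.sum_nonneg fun c _ => abs_nonneg _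
  have hfinal2 : (∑ c, |q c - 1 / N|) ^ 2 ≤ 2 ^ m * ∑ x, p x ^ 2 := by
    calc (∑ c, |q c - 1 / N|) ^ 2 ≤ N * ∑ c, (q c - 1 / N) ^ 2 := hCS
      _ ≤ N * ((2 ^ m * ∑ x, p x ^ 2) / N) := mul_le_mul_of_nonneg_left hvar hN0.le
      _ = 2 ^ m * ∑ x, p x ^ 2 := by field_simp
  -- numerics
  have hL : (2 : ℝ) ^ (Real.logb 2 (1 / ε)) = 1 / ε :=
    Real.rpow_logb (by norm_num) (by norm_num) (by positivity)
  have hm_t : (m : ℝ) - t + 2 = 7 - 2 * Real.logb 2 (1 / ε) := by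
    push_cast at hl
    linarith
  have hnum : (2 : ℝ) ^ m * (2 : ℝ) ^ (-(t - 2)) ≤ (16 * ε) ^ 2 := by
    have h1 : (2 : ℝ) ^ m * (2 : ℝ) ^ (-(t - 2)) = (2 : ℝ) ^ ((m : ℝ) - t + 2) := by
      rw [← Real.rpow_natCast 2 m, ← Real.rpow_add (by norm_num : (0 : ℝ) < 2)]
      congr 1
      ring
    have h2 : (2 : ℝ) ^ ((m : ℝ) - t + 2) = 128 * ε ^ 2 := by
      rw [hm_t]
      have e7 : (7 : ℝ) - 2 * Real.logb 2 (1 / ε)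
          = 7 + (-Real.logb 2 (1 / ε) + -Real.logb 2 (1 / ε)) := by ring
      rw [e7, Real.rpow_add (by norm_num : (0 : ℝ) < 2),
        Real.rpow_add (by norm_num : (0 : ℝ) < 2),
        Real.rpow_neg (by norm_num : (0 : ℝ) ≤ 2), hL]
      rw [show (7 : ℝ) = ((7 : ℕ) : ℝ) by norm_num, Real.rpow_natCast]
      rw [one_div, inv_inv]
      norm_num
      ring
    rw [h1, h2]
    nlinarith [sq_nonneg ε]
  have hS16 : (∑ c, |q c - 1 / N|) ≤ 16 * ε := by
    have hsq : (∑ c, |q c - 1 / N|) ^ 2 ≤ (16 * ε) ^ 2 := by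
      have h2m : (0 : ℝ) ≤ (2 : ℝ) ^ m := by positivity
      calc (∑ c, |q c - 1 / N|) ^ 2 ≤ 2 ^ m * ∑ x, p x ^ 2 := hfinal2
        _ ≤ 2 ^ m * (2 : ℝ) ^ (-(t - 2)) := mul_le_mul_of_nonneg_left hH2 h2m
        _ ≤ (16 * ε) ^ 2 := hnum
    nlinarith [hSnn, hε]
  -- final assembly
  simp only [hg] at hq
  simp only [hq]
  linarith [hS16]
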